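/- In a condensed multi-Catalan tableau, every box in an A-row that is not forced to be empty by having an α below it in the same column must contain an α, and every box in an A-column that is not forced to be empty by having a β to its right in the same row must contain a β; consequently the filling of the whole tableau is uniquely determined by the filling of the DE boxes that do not lie above an A-row or left of an A-column. -/

import Mathlib

inductive MSym : Type
  | a | b | x
deriving DecidableEq

inductive Letter : Type
  | D | E | A
deriving DecidableEq

/-- The content of the diagonal box of row `i` in a staircase filling of size `n`
(boxes `(i, j)` with `i + j < n`; the diagonal box of row `i` is `(i, n-1-i)`). -/
def diagRow (n : ℕ) (F : Fin n → Fin n → Option MSym) (i : Fin n) : Option MSym :=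
  F i ⟨n - 1 - (i : ℕ), by have := i.isLt; omega⟩

def diagCol (n : ℕ) (F : Fin n → Fin n → Option MSym) (j : Fin n) : Option MSym :=
  F ⟨n - 1 - (j : ℕ), by have := j.isLt; omega⟩ j

/-- A box is forced to be empty if there is a `β` to its right in its row or an `α`
below it in its column. -/
def ForcedEmpty (n : ℕ) (F : Fin n → Fin n → Option MSym) (i j : Fin n) : Prop :=
  (∃ j' : Fin n, j < j' ∧ F i j' = some MSym.b) ∨ (∃ i' : Fin n, i < i' ∧ F i' j = some MSym.a)

/-- A multi-Catalan tableau of size `n`: every box on the diagonal is filled (α, β or x);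
a box left of a β in its row or above an α in its column is empty; a non-forced box in a
D-row and E-column contains α or β; in a D-row and A-column contains β; in an A-row and
E-column contains α; every other box is empty. -/
def IsMCT (n : ℕ) (F : Fin n → Fin n → Option MSym) : Prop :=
  (∀ i j : Fin n, n ≤ (i : ℕ) + (j : ℕ) → F i j = none) ∧
  (∀ i : Fin n, diagRow n F i ≠ none) ∧
  (∀ i j : Fin n, (i : ℕ) + (j : ℕ) < n - 1 →
    (ForcedEmpty n F i j → F i j = none) ∧
    (¬ ForcedEmpty n F i j →
      match diagRow n F i, diagCol n F j with
      | some MSym.a, some MSym.b => F i j = some MSym.a ∨ F i j = some MSym.b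
      | some MSym.a, some MSym.x => F i j = some MSym.b
      | some MSym.x, some MSym.b => F i j = some MSym.a
      | _, _ => F i j = none))

def symToLetter : Option MSym → Letter
  | some MSym.a => Letter.D
  | some MSym.b => Letter.E
  | _ => Letter.A

/-- The type of a tableau: the word in {D, E, A} read off the diagonal from top to bottom. -/
def typeWord (n : ℕ) (F : Fin n → Fin n → Option MSym) : List Letter :=
  List.ofFn fun i : Fin n => symToLetter (diagRow n F i)

def countSym (n : ℕ) (F : Fin n → Fin n → Option MSym) (s : MSym) : ℕ :=
  (Finset.univ.filter fun p : Fin n × Fin n => F p.1 p.2 = some s).card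

/-- The weight of a tableau: the product of all its α's and β's. -/
noncomputable def wt (n : ℕ) (α β : ℝ) (F : Fin n → Fin n → Option MSym) : ℝ :=
  α ^ countSym n F MSym.a * β ^ countSym n F MSym.b

/-- The weight generating function of a word: the sum of the weights over all
multi-Catalan tableaux of that type. -/
noncomputable def wordWeight (α β : ℝ) (X : List Letter) : ℝ :=
  ∑ᶠ T : {F : Fin X.length → Fin X.length → Option MSym //
      IsMCT X.length F ∧ typeWord X.length F = X}, wt X.length α β T.1

/-!
A-rows contain no β and A-columns no α, since none of the filling rules can put one there.
Hence a box in an A-row and an E-column can only be forced empty by an α below it, and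
otherwise holds α; symmetrically for A-columns. For uniqueness, the content of a box is a
function of its row and column letters and of the boxes to its right and below it, except
in DE boxes; so two tableaux of the same type that agree on the DE boxes agree everywhere,
by induction from the bottom-right corner.
-/

theorem funext_of_forall_right_below {α β γ : Type*} [Preorder α] [Preorder β]
    [WellFoundedGT (α × β)] {F G : α → β → γ}
    (h : ∀ a b, (∀ b', b < b' → G a b' = F a b') → (∀ a', a < a' → G a' b = F a' b) →
      G a b = F a b) :
    G = F := by
  funext a b
  exact WellFoundedGT.induction (motive := fun p : α × β => G p.1 p.2 = F p.1 p.2) (a, b)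
    fun p ih => h p.1 p.2 (fun b' hb => ih (p.1, b') (Prod.mk_lt_mk_iff_right.2 hb))
      (fun a' ha => ih (a', p.2) (Prod.mk_lt_mk_iff_left.2 ha))

theorem symToLetter_inj_of_ne_none {r s : Option MSym} (hr : r ≠ none) (hs : s ≠ none)
    (h : symToLetter r = symToLetter s) : r = s := by
  rcases r with _ | ⟨_ | _ | _⟩ <;> rcases s with _ | ⟨_ | _ | _⟩ <;> simp_all [symToLetter]

/-- The content of a box that is neither forced empty nor a DE box, as a function of the
letters of its row and column; its value on DE arguments carries no meaning. -/
def determinedFilling : Option MSym → Option MSym → Option MSym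
  | some MSym.a, some MSym.x => some MSym.b
  | some MSym.x, some MSym.b => some MSym.a
  | _, _ => none

variable {n : ℕ} {F G : Fin n → Fin n → Option MSym} {i j : Fin n}

theorem diagCol_eq_diagRow (j : Fin n) :
    diagCol n F j = diagRow n F ⟨n - 1 - (j : ℕ), by omega⟩ := by
  simp only [diagCol, diagRow]
  congr 1
  ext
  simp only
  omega

theorem apply_eq_diagRow (h : (i : ℕ) + j = n - 1) : F i j = diagRow n F i := by
  simp only [diagRow]
  congr 1
  ext
  simp only
  omega

theorem apply_eq_diagCol (h : (i : ℕ) + j = n - 1) : F i j = diagCol n F j := by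
  simp only [diagCol]
  congr 1
  ext
  simp only
  omega

theorem forcedEmpty_congr (hright : ∀ j', j < j' → G i j' = F i j')
    (hbelow : ∀ i', i < i' → G i' j = F i' j) :
    ForcedEmpty n G i j ↔ ForcedEmpty n F i j := by
  unfold ForcedEmpty
  constructor
  · rintro (⟨j', hj, hb⟩ | ⟨i', hi, ha⟩)
    · exact .inl ⟨j', hj, hright j' hj ▸ hb⟩
    · exact .inr ⟨i', hi, hbelow i' hi ▸ ha⟩
  · rintro (⟨j', hj, hb⟩ | ⟨i', hi, ha⟩)
    · exact .inl ⟨j', hj, (hright j' hj).symm ▸ hb⟩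
    · exact .inr ⟨i', hi, (hbelow i' hi).symm ▸ ha⟩

theorem exists_a_below_of_diagCol_eq_a (hc : diagCol n F j = some MSym.a)
    (h : (i : ℕ) + j < n - 1) : ∃ i', i < i' ∧ F i' j = some MSym.a :=
  ⟨⟨n - 1 - j, by omega⟩, Fin.lt_def.2 (by simp only; omega), hc⟩

theorem exists_b_right_of_diagRow_eq_b (hr : diagRow n F i = some MSym.b)
    (h : (i : ℕ) + j < n - 1) : ∃ j', j < j' ∧ F i j' = some MSym.b :=
  ⟨⟨n - 1 - i, by omega⟩, Fin.lt_def.2 (by simp only; omega), hr⟩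

namespace IsMCT

theorem diagCol_ne_none (hF : IsMCT n F) (j : Fin n) : diagCol n F j ≠ none := by
  rw [diagCol_eq_diagRow]
  exact hF.2.1 _

theorem apply_eq_none_of_forcedEmpty (hF : IsMCT n F) (h : (i : ℕ) + j < n - 1)
    (hfe : ForcedEmpty n F i j) : F i j = none :=
  (hF.2.2 i j h).1 hfe

theorem apply_eq_determinedFilling (hF : IsMCT n F) (h : (i : ℕ) + j < n - 1)
    (hfe : ¬ ForcedEmpty n F i j)
    (hDE : ¬ (diagRow n F i = some MSym.a ∧ diagCol n F j = some MSym.b)) :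
    F i j = determinedFilling (diagRow n F i) (diagCol n F j) := by
  have hrule := (hF.2.2 i j h).2 hfe
  rcases hr : diagRow n F i with _ | ⟨_ | _ | _⟩ <;>
    rcases hc : diagCol n F j with _ | ⟨_ | _ | _⟩ <;>
    simp_all [determinedFilling]

theorem apply_ne_b_of_diagRow_eq_x (hF : IsMCT n F) (hx : diagRow n F i = some MSym.x)
    (j : Fin n) : F i j ≠ some MSym.b := by
  rcases lt_trichotomy ((i : ℕ) + j) (n - 1) with h | h | h
  · by_cases hfe : ForcedEmpty n F i j
    · simp [hF.apply_eq_none_of_forcedEmpty h hfe]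
    · rw [hF.apply_eq_determinedFilling h hfe (by simp [hx]), hx]
      rcases diagCol n F j with _ | ⟨_ | _ | _⟩ <;> simp [determinedFilling]
  · simp [apply_eq_diagRow (F := F) h, hx]
  · simp [hF.1 i j (by omega)]

theorem apply_ne_a_of_diagCol_eq_x (hF : IsMCT n F) (hx : diagCol n F j = some MSym.x)
    (i : Fin n) : F i j ≠ some MSym.a := by
  rcases lt_trichotomy ((i : ℕ) + j) (n - 1) with h | h | h
  · by_cases hfe : ForcedEmpty n F i j
    · simp [hF.apply_eq_none_of_forcedEmpty h hfe]
    · rw [hF.apply_eq_determinedFilling h hfe (by simp [hx]), hx]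
      rcases diagRow n F i with _ | ⟨_ | _ | _⟩ <;> simp [determinedFilling]
  · simp [apply_eq_diagCol h, hx]
  · simp [hF.1 i j (by omega)]

theorem diagRow_eq_of_typeWord_eq (hF : IsMCT n F) (hG : IsMCT n G)
    (htype : typeWord n G = typeWord n F) (i : Fin n) : diagRow n G i = diagRow n F i :=
  symToLetter_inj_of_ne_none (hG.2.1 i) (hF.2.1 i) (congrFun (List.ofFn_inj.mp htype) i)

theorem diagCol_eq_of_typeWord_eq (hF : IsMCT n F) (hG : IsMCT n G)
    (htype : typeWord n G = typeWord n F) (j : Fin n) : diagCol n G j = diagCol n F j := by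
  rw [diagCol_eq_diagRow, diagCol_eq_diagRow, hF.diagRow_eq_of_typeWord_eq hG htype]

theorem apply_congr (hF : IsMCT n F) (hG : IsMCT n G)
    (hrow : diagRow n G i = diagRow n F i) (hcol : diagCol n G j = diagCol n F j)
    (hDE : ¬ (diagRow n F i = some MSym.a ∧ diagCol n F j = some MSym.b))
    (hright : ∀ j', j < j' → G i j' = F i j') (hbelow : ∀ i', i < i' → G i' j = F i' j) :
    G i j = F i j := by
  rcases lt_trichotomy ((i : ℕ) + j) (n - 1) with h | h | h
  · have hfe := forcedEmpty_congr hright hbelow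
    by_cases hfF : ForcedEmpty n F i j
    · rw [hF.apply_eq_none_of_forcedEmpty h hfF, hG.apply_eq_none_of_forcedEmpty h (hfe.2 hfF)]
    · rw [hF.apply_eq_determinedFilling h hfF hDE,
        hG.apply_eq_determinedFilling h (hfe.not.2 hfF) (hrow ▸ hcol ▸ hDE), hrow, hcol]
  · rw [apply_eq_diagRow (F := F) h, apply_eq_diagRow (F := G) h, hrow]
  · rw [hF.1 i j (by omega), hG.1 i j (by omega)]

theorem apply_eq_a_of_diagRow_eq_x (hF : IsMCT n F) (hx : diagRow n F i = some MSym.x)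
    (h : (i : ℕ) + j < n - 1) (hcol : diagCol n F j ≠ some MSym.x)
    (hbelow : ¬ ∃ i', i < i' ∧ F i' j = some MSym.a) : F i j = some MSym.a := by
  have hfe : ¬ ForcedEmpty n F i j :=
    not_or.2 ⟨fun ⟨j', _, hb⟩ => hF.apply_ne_b_of_diagRow_eq_x hx j' hb, hbelow⟩
  have hE : diagCol n F j = some MSym.b := by
    rcases hc : diagCol n F j with _ | ⟨_ | _ | _⟩
    · exact absurd hc (hF.diagCol_ne_none j)
    · exact absurd (exists_a_below_of_diagCol_eq_a hc h) hbelow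
    · rfl
    · exact absurd hc hcol
  rw [hF.apply_eq_determinedFilling h hfe (by simp [hx]), hx, hE]
  rfl

theorem apply_eq_b_of_diagCol_eq_x (hF : IsMCT n F) (hx : diagCol n F j = some MSym.x)
    (h : (i : ℕ) + j < n - 1) (hrow : diagRow n F i ≠ some MSym.x)
    (hright : ¬ ∃ j', j < j' ∧ F i j' = some MSym.b) : F i j = some MSym.b := by
  have hfe : ¬ ForcedEmpty n F i j :=
    not_or.2 ⟨hright, fun ⟨i', _, ha⟩ => hF.apply_ne_a_of_diagCol_eq_x hx i' ha⟩
  have hD : diagRow n F i = some MSym.a := by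
    rcases hr : diagRow n F i with _ | ⟨_ | _ | _⟩
    · exact absurd hr (hF.2.1 i)
    · rfl
    · exact absurd (exists_b_right_of_diagRow_eq_b hr h) hright
    · exact absurd hr hrow
  rw [hF.apply_eq_determinedFilling h hfe (by simp [hx]), hx, hD]
  rfl

theorem eq_of_typeWord_eq_of_eqOn_DE (hF : IsMCT n F) (hG : IsMCT n G)
    (htype : typeWord n G = typeWord n F)
    (hDE : ∀ i j, diagRow n F i = some MSym.a → diagCol n F j = some MSym.b → G i j = F i j) :
    G = F := by
  refine funext_of_forall_right_below fun i j hright hbelow => ?_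
  by_cases hij : diagRow n F i = some MSym.a ∧ diagCol n F j = some MSym.b
  · exact hDE i j hij.1 hij.2
  · exact hF.apply_congr hG (hF.diagRow_eq_of_typeWord_eq hG htype i)
      (hF.diagCol_eq_of_typeWord_eq hG htype j) hij hright hbelow

end IsMCT

/-- Every box in an A-row (not in an A-column) that is not forced empty by an α below it
contains an α; every box in an A-column (not in an A-row) that is not forced empty by a
β to its right contains a β; consequently, a multi-Catalan tableau is uniquely
determined by its type and the filling of its DE boxes. -/
theorem A_row_column_determined (n : ℕ) (F : Fin n → Fin n → Option MSym)
    (hF : IsMCT n F) :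
    (∀ i0 j : Fin n, diagRow n F i0 = some MSym.x → (j : ℕ) < n - 1 - (i0 : ℕ) →
      diagCol n F j ≠ some MSym.x →
      (¬ ∃ i' : Fin n, i0 < i' ∧ F i' j = some MSym.a) → F i0 j = some MSym.a) ∧
    (∀ i j0 : Fin n, diagCol n F j0 = some MSym.x → (i : ℕ) < n - 1 - (j0 : ℕ) →
      diagRow n F i ≠ some MSym.x →
      (¬ ∃ j' : Fin n, j0 < j' ∧ F i j' = some MSym.b) → F i j0 = some MSym.b) ∧
    (∀ G : Fin n → Fin n → Option MSym, IsMCT n G → typeWord n G = typeWord n F →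
      (∀ i j : Fin n, diagRow n F i = some MSym.a → diagCol n F j = some MSym.b →
        G i j = F i j) →
      G = F) :=
  ⟨fun i0 j hx hj => hF.apply_eq_a_of_diagRow_eq_x hx (by omega),
    fun i j0 hx hi => hF.apply_eq_b_of_diagCol_eq_x hx (by omega),
    fun _ hG htype hDE => hF.eq_of_typeWord_eq_of_eqOn_DE hG htype hDE⟩
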